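/- arXiv:1904.08902 — 3 statements merged into one kernel-verified Lean document; each statement's English description precedes it below -/
import Mathlib

section
/- Let X be a compact Hausdorff space, let B be a base of X consisting of cozero sets, and let s be a witness of the FNS property for B. Then for every countable family A ⊆ B there exists a countable, weakly completely regular family P with A ⊆ P ⊆ B and s(V) ⊆ P for all V ∈ P. -/
/-- A base of a topological space: a family of open sets such that every open
set is a union of members of the family. -/
def IsTopBase {X : Type*} [TopologicalSpace X] (B : Set (Set X)) : Prop :=
  (∀ U ∈ B, IsOpen U) ∧ ∀ U : Set X, IsOpen U → ∃ S ⊆ B, U = ⋃₀ S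

/-- A π-base: a family of nonempty open sets such that every nonempty open set
contains a member of the family. -/
def IsPiBase {X : Type*} [TopologicalSpace X] (B : Set (Set X)) : Prop :=
  (∀ U ∈ B, IsOpen U ∧ U.Nonempty) ∧
  ∀ U : Set X, IsOpen U → U.Nonempty → ∃ V ∈ B, V ⊆ U

/-- A cozero set: a set of the form `f ⁻¹' (0,1]` for a continuous `f : X → [0,1]`. -/
def IsCozeroSet {X : Type*} [TopologicalSpace X] (U : Set X) : Prop :=
  ∃ f : X → ℝ, Continuous f ∧ (∀ x, f x ∈ Set.Icc (0 : ℝ) 1) ∧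
    U = f ⁻¹' Set.Ioc (0 : ℝ) 1

/-- `s` witnesses the FNS property for the family `B`: it assigns to each
`U ∈ B` a finite subfamily `s U ⊆ B` such that whenever `U, V ∈ B` are
disjoint there are disjoint `W_U, W_V ∈ s U ∩ s V` with `U ⊆ W_U`, `V ⊆ W_V`. -/
def FNSWitness {X : Type*} (B : Set (Set X)) (s : Set X → Set (Set X)) : Prop :=
  (∀ U ∈ B, s U ⊆ B ∧ (s U).Finite) ∧
  ∀ U ∈ B, ∀ V ∈ B, Disjoint U V →
    ∃ WU ∈ s U ∩ s V, ∃ WV ∈ s U ∩ s V, Disjoint WU WV ∧ U ⊆ WU ∧ V ⊆ WV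

/-- A family `B` has the FNS property if some `s` witnesses it. -/
def HasFNS {X : Type*} (B : Set (Set X)) : Prop :=
  ∃ s : Set X → Set (Set X), FNSWitness B s

/-- A space has the π-FNS property if some π-base of it has the FNS property. -/
def HasPiFNS (X : Type*) [TopologicalSpace X] : Prop :=
  ∃ B : Set (Set X), IsPiBase B ∧ HasFNS B

/-- `u, l` witness the FN property for the family `F`. -/
def FNWitness {X : Type*} (F : Set (Set X)) (u l : Set X → Set (Set X)) : Prop :=
  (∀ V ∈ F, (u V).Finite ∧ ∀ U ∈ u V, U ∈ F ∧ V ⊆ U) ∧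
  (∀ V ∈ F, (l V).Finite ∧ ∀ U ∈ l V, U ∈ F ∧ U ⊆ V) ∧
  ∀ V ∈ F, ∀ W ∈ F, V ⊆ W → (u V ∩ l W).Nonempty

/-- A family `F` has the FN property if some pair `u, l` witnesses it. -/
def HasFN {X : Type*} (F : Set (Set X)) : Prop :=
  ∃ u l : Set X → Set (Set X), FNWitness F u l

/-- A family `P` of subsets of `X` is weakly completely regular: for any
finitely many `U₁, …, U_k ∈ P` (`k ≥ 1`) there are sequences `(A n)`, `(B n)`
of finite subfamilies of `P` with
`U₁ ∩ … ∩ U_k = ⋃ n, ⋃₀ A n = ⋃ n, (X \ ⋃₀ B n)` and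
`⋃₀ A n ⊆ X \ ⋃₀ B n` for each `n`. -/
def WeaklyCompletelyRegularFamily {X : Type*} (P : Set (Set X)) : Prop :=
  ∀ S : Set (Set X), S.Finite → S.Nonempty → S ⊆ P →
    ∃ A B : ℕ → Set (Set X),
      (∀ n, A n ⊆ P ∧ (A n).Finite) ∧ (∀ n, B n ⊆ P ∧ (B n).Finite) ∧
      ⋂₀ S = ⋃ n, ⋃₀ A n ∧ ⋂₀ S = ⋃ n, (⋃₀ B n)ᶜ ∧
      ∀ n, ⋃₀ A n ⊆ (⋃₀ B n)ᶜ

/-- The equivalence relation `x ~_P y` iff `x, y` belong to exactly the same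
members of `P`. -/
def famSetoid {X : Type*} (P : Set (Set X)) : Setoid X where
  r x y := ∀ V ∈ P, (x ∈ V ↔ y ∈ V)
  iseqv := ⟨fun _ _ _ => Iff.rfl, fun h V hV => (h V hV).symm,
    fun h1 h2 V hV => (h1 V hV).trans (h2 V hV)⟩

/-!
A finite intersection of cozero sets is a cozero set `{f > 0}`. Exhausting it by the compact sets
`{f ≥ 1/(n+1)}` and covering each of these, and the compact complement `{f = 0}`, by finitely
many members of the base exhibits it as weakly completely regular with respect to the base; only
countably many members of the base are used. Closing a countable family off, in `ω` steps, under
`s` and under the choice of these countably many witnesses gives `P`.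
-/

open Set

section Cozero

variable {X : Type*} [TopologicalSpace X]

theorem IsCozeroSet.univ : IsCozeroSet (univ : Set X) :=
  ⟨fun _ => 1, continuous_const, fun _ => ⟨zero_le_one, le_rfl⟩, by ext; simp⟩

theorem IsCozeroSet.inter {U V : Set X} (hU : IsCozeroSet U) (hV : IsCozeroSet V) :
    IsCozeroSet (U ∩ V) := by
  obtain ⟨f, hf, hfI, rfl⟩ := hU
  obtain ⟨g, hg, hgI, rfl⟩ := hV
  refine ⟨fun x => min (f x) (g x), hf.min hg,
    fun x => ⟨le_min (hfI x).1 (hgI x).1, min_le_of_left_le (hfI x).2⟩, ?_⟩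
  ext x
  simp only [mem_inter_iff, mem_preimage, mem_Ioc, lt_min_iff]
  exact ⟨fun h => ⟨⟨h.1.1, h.2.1⟩, min_le_of_left_le h.1.2⟩,
    fun h => ⟨⟨h.1.1, (hfI x).2⟩, ⟨h.1.2, (hgI x).2⟩⟩⟩

theorem IsCozeroSet.sInter {S : Set (Set X)} (hS : S.Finite) (h : ∀ U ∈ S, IsCozeroSet U) :
    IsCozeroSet (⋂₀ S) := by
  induction S, hS using Set.Finite.induction_on with
  | empty => simpa using IsCozeroSet.univ
  | @insert U S _ _ ih =>
    rw [sInter_insert]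
    exact (h U (mem_insert U S)).inter (ih fun V hV => h V (mem_insert_of_mem U hV))

end Cozero

section Approximation

variable {X : Type*}

/-- `U` admits the two sequences of finite subfamilies of `F` required of a finite intersection
of members of a weakly completely regular family `F`. -/
def IsWCRApprox (F : Set (Set X)) (U : Set X) : Prop :=
  ∃ A B : ℕ → Set (Set X),
    (∀ n, A n ⊆ F ∧ (A n).Finite) ∧ (∀ n, B n ⊆ F ∧ (B n).Finite) ∧
    U = ⋃ n, ⋃₀ A n ∧ U = ⋃ n, (⋃₀ B n)ᶜ ∧ ∀ n, ⋃₀ A n ⊆ (⋃₀ B n)ᶜ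

theorem IsWCRApprox.mono {F G : Set (Set X)} {U : Set X} (hU : IsWCRApprox F U) (hFG : F ⊆ G) :
    IsWCRApprox G U := by
  obtain ⟨A, B, hA, hB, hUA, hUB, hAB⟩ := hU
  exact ⟨A, B, fun n => ⟨(hA n).1.trans hFG, (hA n).2⟩,
    fun n => ⟨(hB n).1.trans hFG, (hB n).2⟩, hUA, hUB, hAB⟩

theorem IsWCRApprox.exists_countable {F : Set (Set X)} {U : Set X} (hU : IsWCRApprox F U) :
    ∃ G ⊆ F, G.Countable ∧ IsWCRApprox G U := by
  obtain ⟨A, B, hA, hB, hUA, hUB, hAB⟩ := hU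
  refine ⟨⋃ n, A n ∪ B n, iUnion_subset fun n => union_subset (hA n).1 (hB n).1,
    countable_iUnion fun n => ((hA n).2.union (hB n).2).countable,
    A, B, fun n => ⟨?_, (hA n).2⟩, fun n => ⟨?_, (hB n).2⟩, hUA, hUB, hAB⟩
  · exact subset_union_left.trans (subset_iUnion (fun n => A n ∪ B n) n)
  · exact subset_union_right.trans (subset_iUnion (fun n => A n ∪ B n) n)

variable [TopologicalSpace X]

theorem IsTopBase.exists_finite_cover {B : Set (Set X)} (hB : IsTopBase B) {K W : Set X}
    (hK : IsCompact K) (hW : IsOpen W) (hKW : K ⊆ W) :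
    ∃ F ⊆ B, F.Finite ∧ K ⊆ ⋃₀ F ∧ ⋃₀ F ⊆ W := by
  obtain ⟨S, hSB, rfl⟩ := hB.2 W hW
  rw [sUnion_eq_biUnion] at hKW
  obtain ⟨F, hFS, hF, hKF⟩ := hK.elim_finite_subcover_image (fun U hU => hB.1 U (hSB hU)) hKW
  exact ⟨F, hFS.trans hSB, hF, sUnion_eq_biUnion ▸ hKF, sUnion_mono hFS⟩

/-- The finite covers `A n` of `K n` are taken inside `interior (C n)`, and the finite covers
`B n` of the compact set `Uᶜ` inside `(C n)ᶜ`. -/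
theorem IsTopBase.isWCRApprox_of_exhaustion [CompactSpace X] {B : Set (Set X)}
    (hB : IsTopBase B) {U : Set X} {K C : ℕ → Set X} (hK : ∀ n, IsCompact (K n))
    (hC : ∀ n, IsClosed (C n)) (hKC : ∀ n, K n ⊆ interior (C n)) (hCU : ∀ n, C n ⊆ U)
    (hUK : U ⊆ ⋃ n, K n) : IsWCRApprox B U := by
  have hU : IsOpen U := by
    have : U = ⋃ n, interior (C n) :=
      (hUK.trans (iUnion_mono hKC)).antisymm
        (iUnion_subset fun n => interior_subset.trans (hCU n))
    exact this ▸ isOpen_iUnion fun n => isOpen_interior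
  choose A hAB hA hKA hAC using fun n =>
    hB.exists_finite_cover (hK n) isOpen_interior (hKC n)
  choose D hDB hD hUD hDC using fun n =>
    hB.exists_finite_cover hU.isClosed_compl.isCompact (hC n).isOpen_compl
      (compl_subset_compl.2 (hCU n))
  have hCD : ∀ n, C n ⊆ (⋃₀ D n)ᶜ := fun n => subset_compl_comm.1 (hDC n)
  refine ⟨A, D, fun n => ⟨hAB n, hA n⟩, fun n => ⟨hDB n, hD n⟩, ?_, ?_,
    fun n => (hAC n).trans (interior_subset.trans (hCD n))⟩
  · exact (hUK.trans (iUnion_mono hKA)).antisymm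
      (iUnion_subset fun n => (hAC n).trans (interior_subset.trans (hCU n)))
  · refine (hUK.trans (iUnion_mono fun n => ?_)).antisymm
      (iUnion_subset fun n => compl_subset_comm.1 (hUD n))
    exact (hKC n).trans (interior_subset.trans (hCD n))

theorem IsCozeroSet.isWCRApprox [CompactSpace X] {B : Set (Set X)} (hB : IsTopBase B)
    {U : Set X} (hU : IsCozeroSet U) : IsWCRApprox B U := by
  obtain ⟨f, hf, hfI, rfl⟩ := hU
  have hlt : ∀ n : ℕ, (1 / (n + 2) : ℝ) < 1 / (n + 1) := fun n =>
    one_div_lt_one_div_of_lt (by positivity) (by linarith)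
  refine hB.isWCRApprox_of_exhaustion (K := fun n => f ⁻¹' Ici (1 / (n + 1)))
    (C := fun n => f ⁻¹' Ici (1 / (n + 2)))
    (fun n => (isClosed_Ici.preimage hf).isCompact) (fun n => isClosed_Ici.preimage hf)
    (fun n => ?_) (fun n x hx => ⟨lt_of_lt_of_le (by positivity) hx, (hfI x).2⟩)
    (fun x hx => ?_)
  · refine Subset.trans ?_ (interior_mono (preimage_mono (Ioi_subset_Ici_self (a := _))))
    rw [(isOpen_Ioi.preimage hf).interior_eq]
    exact fun x hx => lt_of_lt_of_le (hlt n) hx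
  · obtain ⟨n, hn⟩ := exists_nat_one_div_lt hx.1
    exact mem_iUnion.2 ⟨n, le_of_lt hn⟩

end Approximation

theorem Set.Countable.exists_closure_of_finitary {α : Type*} {A B : Set α} (g : Set α → Set α)
    (hg : ∀ S ⊆ B, S.Finite → g S ⊆ B ∧ (g S).Countable) (hAB : A ⊆ B) (hA : A.Countable) :
    ∃ P, A ⊆ P ∧ P ⊆ B ∧ P.Countable ∧ ∀ S ⊆ P, S.Finite → g S ⊆ P := by
  let step : Set α → Set α := fun P => P ∪ ⋃ S ∈ {S | S.Finite ∧ S ⊆ P}, g S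
  let c : ℕ → Set α := fun k => step^[k] A
  have hc : ∀ k, c k ⊆ B ∧ (c k).Countable := by
    intro k
    induction k with
    | zero => exact ⟨hAB, hA⟩
    | succ k ih =>
      simp only [c, Function.iterate_succ_apply']
      exact ⟨union_subset ih.1 (iUnion₂_subset fun S hS => (hg S (hS.2.trans ih.1) hS.1).1),
        ih.2.union ((countable_ofPred_finite_subset ih.2).biUnion fun S hS =>
          (hg S (hS.2.trans ih.1) hS.1).2)⟩
  have hmono : Monotone c := monotone_nat_of_le_succ fun k => by
    simp only [c, Function.iterate_succ_apply']
    exact subset_union_left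
  refine ⟨⋃ k, c k, subset_iUnion c 0, iUnion_subset fun k => (hc k).1,
    countable_iUnion fun k => (hc k).2, fun S hSP hS => ?_⟩
  obtain ⟨k, hk⟩ := hmono.directed_le.exists_mem_subset_of_finset_subset_biUnion
    (s := hS.toFinset) (by rwa [hS.coe_toFinset])
  rw [hS.coe_toFinset] at hk
  have hSk : S ∈ {S | S.Finite ∧ S ⊆ c k} := ⟨hS, hk⟩
  have : g S ⊆ c (k + 1) := by
    simp only [c, Function.iterate_succ_apply']
    exact subset_union_of_subset_right (subset_biUnion_of_mem (u := g) hSk) _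
  exact this.trans (subset_iUnion c (k + 1))

theorem exists_countable_wcr_closed_under_s_general {X : Type*} [TopologicalSpace X]
    [CompactSpace X] (B : Set (Set X)) (hB : IsTopBase B)
    (hBcoz : ∀ U ∈ B, IsCozeroSet U) (s : Set X → Set (Set X))
    (hs : FNSWitness B s) :
    ∀ A : Set (Set X), A ⊆ B → A.Countable →
      ∃ P : Set (Set X), A ⊆ P ∧ P ⊆ B ∧ P.Countable ∧
        WeaklyCompletelyRegularFamily P ∧ ∀ V ∈ P, s V ⊆ P := by
  intro A hAB hA
  have hW : ∀ S : Set (Set X), ∃ W ⊆ B, W.Countable ∧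
      (S ⊆ B → S.Finite → IsWCRApprox W (⋂₀ S)) := by
    intro S
    by_cases hS : S ⊆ B ∧ S.Finite
    · obtain ⟨W, hWB, hW, hSW⟩ := ((IsCozeroSet.sInter hS.2 fun U hU =>
        hBcoz U (hS.1 hU)).isWCRApprox hB).exists_countable
      exact ⟨W, hWB, hW, fun _ _ => hSW⟩
    · exact ⟨∅, empty_subset B, countable_empty, fun h h' => absurd ⟨h, h'⟩ hS⟩
  choose W hWB hW hSW using hW
  obtain ⟨P, hAP, hPB, hP, hPW⟩ := hA.exists_closure_of_finitary
    (fun S => W S ∪ ⋃ V ∈ S, s V)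
    (fun S hSB hS => ⟨union_subset (hWB S) (iUnion₂_subset fun V hV => (hs.1 V (hSB hV)).1),
      (hW S).union (hS.countable.biUnion fun V hV => (hs.1 V (hSB hV)).2.countable)⟩) hAB
  refine ⟨P, hAP, hPB, hP, fun S hS _ hSP => ?_, fun V hV => ?_⟩
  · exact (hSW S (hSP.trans hPB) hS).mono (subset_union_left.trans (hPW S hSP hS))
  · have := hPW {V} (singleton_subset_iff.2 hV) (finite_singleton V)
    simpa using union_subset_iff.1 this |>.2

/-- If `B` is a base of a compact Hausdorff space consisting of cozero sets and
`s` witnesses the FNS property for `B`, then every countable `A ⊆ B` extends to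
a countable weakly completely regular family `P` with `A ⊆ P ⊆ B` closed under
the operator `s`. -/
theorem exists_countable_wcr_closed_under_s {X : Type*} [TopologicalSpace X]
    [CompactSpace X] [T2Space X] (B : Set (Set X)) (hB : IsTopBase B)
    (hBcoz : ∀ U ∈ B, IsCozeroSet U) (s : Set X → Set (Set X))
    (hs : FNSWitness B s) :
    ∀ A : Set (Set X), A ⊆ B → A.Countable →
      ∃ P : Set (Set X), A ⊆ P ∧ P ⊆ B ∧ P.Countable ∧
        WeaklyCompletelyRegularFamily P ∧ ∀ V ∈ P, s V ⊆ P :=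
  exists_countable_wcr_closed_under_s_general B hB hBcoz s hs
end

section
/- Every metrizable topological space has the FN property. -/
/-!
For each `n` take a locally finite open refinement of the cover of `X` by balls of radius
`1 / (n + 1)`, and let `B` consist of the nonempty members of all these refinements. If
`x ∈ V ∈ B` and `ball x ε ⊆ V`, then a member of a level of radius `< ε / 2` containing `V`
lies in `ball x ε`, hence equals `V`; at each of the finitely many coarser levels only
finitely many members contain `x`. So every member of `B` has only finitely many supersets
in `B`, and then `u V := {U ∈ B | V ⊆ U}`, `l W := {W}` witness the FN property.
-/

open Set Filter Topology Metric TopologicalSpace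

theorem hasFN_of_finite_supersets {X : Type*} {F : Set (Set X)}
    (hF : ∀ V ∈ F, {U ∈ F | V ⊆ U}.Finite) : HasFN F :=
  ⟨fun V => {U ∈ F | V ⊆ U}, fun V => {V},
    fun V hV => ⟨hF V hV, fun _ hU => hU⟩,
    fun V hV => ⟨finite_singleton V, by rintro _ rfl; exact ⟨hV, subset_rfl⟩⟩,
    fun _ _ W hW hVW => ⟨W, ⟨hW, hVW⟩, rfl⟩⟩

theorem isTopBase_of_isTopologicalBasis {X : Type*} [TopologicalSpace X] {B : Set (Set X)}
    (hB : IsTopologicalBasis B) : IsTopBase B :=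
  ⟨fun _ hU => hB.isOpen hU, fun _ hU => hB.open_eq_sUnion hU⟩

theorem Metric.subset_ball_two_mul_of_mem {X : Type*} [PseudoMetricSpace X] {W : Set X}
    {x c : X} {r : ℝ} (hx : x ∈ W) (hW : W ⊆ ball c r) : W ⊆ ball x (2 * r) :=
  hW.trans <| ball_subset_ball' <| by
    have := mem_ball.1 (hW hx)
    rw [dist_comm]
    linarith

def nonemptyMembers {X : Type*} (v : ℕ → X → Set X) : Set (Set X) :=
  {W ∈ ⋃ n, range (v n) | W.Nonempty}

section SigmaLocallyFiniteBase

variable {X : Type*} [PseudoMetricSpace X] {v : ℕ → X → Set X} {r : ℕ → ℝ} (hopen : ∀ n c, IsOpen (v n c))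
  (hr : Tendsto r atTop (𝓝 0)) (hsub : ∀ n c, v n c ⊆ ball c (r n))
include hopen hr hsub

theorem isTopologicalBasis_nonemptyMembers (hcover : ∀ n, ⋃ c, v n c = univ) :
    IsTopologicalBasis (nonemptyMembers v) := by
  refine isTopologicalBasis_of_isOpen_of_nhds ?_ fun x U hxU hU => ?_
  · rintro _ ⟨hW, -⟩
    obtain ⟨n, c, rfl⟩ := mem_iUnion.1 hW
    exact hopen n c
  obtain ⟨ε, hε, hballU⟩ := isOpen_iff.1 hU x hxU
  obtain ⟨n, hn⟩ := (hr.eventually (gt_mem_nhds (half_pos hε))).exists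
  obtain ⟨c, hxc⟩ := mem_iUnion.1 ((hcover n).symm ▸ mem_univ x : x ∈ ⋃ c, v n c)
  refine ⟨v n c, ⟨mem_iUnion.2 ⟨n, c, rfl⟩, x, hxc⟩, hxc, ?_⟩
  exact (subset_ball_two_mul_of_mem hxc (hsub n c)).trans
    (hballU.trans' (ball_subset_ball (by linarith)))

theorem finite_supersets_nonemptyMembers (hlf : ∀ n, LocallyFinite (v n)) :
    ∀ V ∈ nonemptyMembers v, {U ∈ nonemptyMembers v | V ⊆ U}.Finite := by
  rintro V ⟨hV, x, hxV⟩
  obtain ⟨n, c, rfl⟩ := mem_iUnion.1 hV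
  obtain ⟨ε, hε, hballV⟩ := isOpen_iff.1 (hopen n c) x hxV
  obtain ⟨M, hM⟩ := eventually_atTop.1 (hr.eventually (gt_mem_nhds (half_pos hε)))
  have fine_eq : ∀ m ≥ M, ∀ d, v n c ⊆ v m d → v m d = v n c := fun m hm d hVW =>
    ((subset_ball_two_mul_of_mem (hVW hxV) (hsub m d)).trans
      (hballV.trans' (ball_subset_ball (by linarith [hM m hm])))).antisymm hVW
  refine (((finite_Iio M).biUnion fun m _ => ((hlf m).point_finite x).image (v m)).insert
    (v n c)).subset ?_
  rintro _ ⟨⟨hW, -⟩, hVW⟩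
  obtain ⟨m, d, rfl⟩ := mem_iUnion.1 hW
  rcases lt_or_ge m M with hm | hm
  · exact mem_insert_of_mem _ (mem_biUnion hm ⟨d, hVW hxV, rfl⟩)
  · exact fine_eq m hm d hVW ▸ mem_insert _ _

end SigmaLocallyFiniteBase

theorem Metric.exists_isTopBase_finite_supersets (X : Type*) [PseudoMetricSpace X] :
    ∃ B : Set (Set X), IsTopBase B ∧ ∀ V ∈ B, {U ∈ B | V ⊆ U}.Finite := by
  choose v hopen hcover hlf hsub using fun n : ℕ =>
    precise_refinement (fun c : X => ball c (1 / ((n : ℝ) + 1))) (fun _ => isOpen_ball)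
      (iUnion_eq_univ_iff.2 fun x => ⟨x, mem_ball_self (by positivity)⟩)
  have hr := tendsto_one_div_add_atTop_nhds_zero_nat (𝕜 := ℝ)
  exact ⟨nonemptyMembers v,
    isTopBase_of_isTopologicalBasis (isTopologicalBasis_nonemptyMembers hopen hr hsub hcover),
    finite_supersets_nonemptyMembers hopen hr hsub hlf⟩

/-- Every metrizable space has the FN property. -/
theorem hasFN_of_metrizable {X : Type*} [TopologicalSpace X]
    [TopologicalSpace.MetrizableSpace X] :
    ∃ B : Set (Set X), IsTopBase B ∧ HasFN B := by
  let := TopologicalSpace.metrizableSpaceMetric X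
  obtain ⟨B, hB, hfin⟩ := exists_isTopBase_finite_supersets X
  exact ⟨B, hB, hasFN_of_finite_supersets hfin⟩
end

section
/- Let Z, X, Y be topological spaces and let g : Z → X and f : Z → Y be irreducible maps. If X has the π-FNS property, then Y has the π-FNS property; moreover, if B_X is a π-base of X with the FNS property, then {f^#(g⁻¹(V)) : V ∈ B_X} is a π-base of Y with the FNS property. (In particular, every space co-absolute to a space with the π-FNS property has the π-FNS property.) -/
/-- The small image `f^#(U) = {y : f⁻¹(y) ⊆ U}`. -/
def smallImage {Z Y : Type*} (f : Z → Y) (U : Set Z) : Set Y :=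
  {y | f ⁻¹' {y} ⊆ U}

/-- An irreducible map: a continuous closed surjection such that no proper
closed subset of the domain maps onto the codomain. -/
def IsIrreducibleMap {Z Y : Type*} [TopologicalSpace Z] [TopologicalSpace Y]
    (f : Z → Y) : Prop :=
  Continuous f ∧ IsClosedMap f ∧ Function.Surjective f ∧
  ∀ F : Set Z, IsClosed F → F ≠ Set.univ → f '' F ≠ Set.univ


/-!
For an irreducible map `f`, the small image `f^#` sends nonempty open sets to nonempty open
sets and commutes with intersections. Hence `φ V = f^#(g⁻¹ V)` is monotone and preserves and
reflects disjointness of open sets, so an FNS selection on `B_X` transports along `φ`.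
The image is a π-base because every nonempty open `W ⊆ Y` contains `φ (g^#(f⁻¹ W))`.
-/

open Function Set

section SmallImage

variable {Z Y : Type*}

theorem smallImage_eq_compl_image_compl (f : Z → Y) (U : Set Z) :
    smallImage f U = (f '' Uᶜ)ᶜ := by
  ext y
  simp only [smallImage, mem_ofPred_eq, mem_compl_iff, mem_image, not_exists, not_and]
  exact ⟨fun h z hz hzy => hz (h hzy), fun h z hzy => by_contra fun hz => h z hz hzy⟩

theorem smallImage_mono (f : Z → Y) : Monotone (smallImage f) :=
  fun _ _ h _ hy => hy.trans h

theorem smallImage_inter (f : Z → Y) (U V : Set Z) :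
    smallImage f (U ∩ V) = smallImage f U ∩ smallImage f V := by
  ext y
  simp [smallImage, subset_inter_iff]

theorem preimage_smallImage_subset (f : Z → Y) (U : Set Z) : f ⁻¹' smallImage f U ⊆ U :=
  fun _ hz => hz rfl

theorem Function.Surjective.smallImage_preimage_subset {f : Z → Y} (hf : Surjective f)
    (W : Set Y) : smallImage f (f ⁻¹' W) ⊆ W := by
  intro y hy
  obtain ⟨z, rfl⟩ := hf y
  exact hy rfl

theorem Function.Surjective.disjoint_smallImage {f : Z → Y} (hf : Surjective f)
    {U V : Set Z} (h : Disjoint U V) : Disjoint (smallImage f U) (smallImage f V) := by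
  rw [disjoint_iff_inter_eq_empty, ← smallImage_inter, disjoint_iff_inter_eq_empty.mp h,
    eq_empty_iff_forall_notMem]
  intro y hy
  obtain ⟨z, rfl⟩ := hf y
  exact hy rfl

variable [TopologicalSpace Z] [TopologicalSpace Y]

theorem IsClosedMap.isOpen_smallImage {f : Z → Y} (hf : IsClosedMap f) {U : Set Z}
    (hU : IsOpen U) : IsOpen (smallImage f U) := by
  rw [smallImage_eq_compl_image_compl]
  exact (hf _ hU.isClosed_compl).isOpen_compl

theorem IsIrreducibleMap.smallImage_nonempty {f : Z → Y} (hf : IsIrreducibleMap f)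
    {U : Set Z} (hU : IsOpen U) (hne : U.Nonempty) : (smallImage f U).Nonempty := by
  rw [smallImage_eq_compl_image_compl, nonempty_compl]
  refine hf.2.2.2 _ hU.isClosed_compl fun h => ?_
  obtain ⟨z, hz⟩ := hne
  exact (h ▸ mem_univ z : z ∈ Uᶜ) hz

theorem IsIrreducibleMap.disjoint_of_disjoint_smallImage {f : Z → Y}
    (hf : IsIrreducibleMap f) {U V : Set Z} (hU : IsOpen U) (hV : IsOpen V)
    (h : Disjoint (smallImage f U) (smallImage f V)) : Disjoint U V := by
  rw [disjoint_iff_inter_eq_empty, ← not_nonempty_iff_eq_empty] at h ⊢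
  exact fun hne => h (smallImage_inter f U V ▸ hf.smallImage_nonempty (hU.inter hV) hne)

end SmallImage

theorem HasFNS.image {X Y : Type*} {B : Set (Set X)} (hB : HasFNS B) {φ : Set X → Set Y}
    (hmono : Monotone φ) (hdisj : ∀ U V, Disjoint U V → Disjoint (φ U) (φ V))
    (hrefl : ∀ U ∈ B, ∀ V ∈ B, Disjoint (φ U) (φ V) → Disjoint U V) :
    HasFNS (φ '' B) := by
  obtain ⟨s, hs_sub, hs_sep⟩ := hB
  set pick := invFunOn φ B
  have hpick_mem : ∀ W ∈ φ '' B, pick W ∈ B := fun _ hW => invFunOn_mem hW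
  have hpick_eq : ∀ W ∈ φ '' B, φ (pick W) = W := fun _ hW => invFunOn_eq hW
  refine ⟨fun W => φ '' s (pick W), fun W hW => ?_, fun W₁ hW₁ W₂ hW₂ hd => ?_⟩
  · obtain ⟨hsub, hfin⟩ := hs_sub _ (hpick_mem W hW)
    exact ⟨image_mono hsub, hfin.image φ⟩
  · have hd' : Disjoint (pick W₁) (pick W₂) := hrefl _ (hpick_mem W₁ hW₁) _
      (hpick_mem W₂ hW₂) (by rwa [hpick_eq W₁ hW₁, hpick_eq W₂ hW₂])
    obtain ⟨U, ⟨hU₁, hU₂⟩, V, ⟨hV₁, hV₂⟩, hUV, hW₁U, hW₂V⟩ :=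
      hs_sep _ (hpick_mem W₁ hW₁) _ (hpick_mem W₂ hW₂) hd'
    refine ⟨φ U, ⟨mem_image_of_mem φ hU₁, mem_image_of_mem φ hU₂⟩,
      φ V, ⟨mem_image_of_mem φ hV₁, mem_image_of_mem φ hV₂⟩, hdisj U V hUV, ?_, ?_⟩
    · exact hpick_eq W₁ hW₁ ▸ hmono hW₁U
    · exact hpick_eq W₂ hW₂ ▸ hmono hW₂V

section Coabsolute

variable {Z X Y : Type*} [TopologicalSpace Z] [TopologicalSpace X] [TopologicalSpace Y]
  {g : Z → X} {f : Z → Y}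

theorem isOpen_smallImage_preimage (hg : Continuous g) (hf : IsClosedMap f) {V : Set X}
    (hV : IsOpen V) : IsOpen (smallImage f (g ⁻¹' V)) :=
  hf.isOpen_smallImage (hV.preimage hg)

theorem smallImage_preimage_nonempty (hg : Continuous g) (hg' : Surjective g)
    (hf : IsIrreducibleMap f) {V : Set X} (hV : IsOpen V) (hne : V.Nonempty) :
    (smallImage f (g ⁻¹' V)).Nonempty :=
  hf.smallImage_nonempty (hV.preimage hg) (hne.preimage hg')

theorem disjoint_of_disjoint_smallImage_preimage (hg : Continuous g) (hg' : Surjective g)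
    (hf : IsIrreducibleMap f) {V₁ V₂ : Set X} (hV₁ : IsOpen V₁) (hV₂ : IsOpen V₂)
    (h : Disjoint (smallImage f (g ⁻¹' V₁)) (smallImage f (g ⁻¹' V₂))) : Disjoint V₁ V₂ :=
  Disjoint.of_preimage hg' <|
    hf.disjoint_of_disjoint_smallImage (hV₁.preimage hg) (hV₂.preimage hg) h

theorem IsPiBase.image_smallImage_preimage (hg : IsIrreducibleMap g)
    (hf : IsIrreducibleMap f) {BX : Set (Set X)} (hB : IsPiBase BX) :
    IsPiBase ((fun V => smallImage f (g ⁻¹' V)) '' BX) := by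
  refine ⟨?_, fun W hW hne => ?_⟩
  · rintro _ ⟨V, hV, rfl⟩
    obtain ⟨hVo, hVne⟩ := hB.1 V hV
    exact ⟨isOpen_smallImage_preimage hg.1 hf.2.1 hVo,
      smallImage_preimage_nonempty hg.1 hg.2.2.1 hf hVo hVne⟩
  · obtain ⟨V, hV, hVW⟩ := hB.2 _ (isOpen_smallImage_preimage hf.1 hg.2.1 hW)
      (smallImage_preimage_nonempty hf.1 hf.2.2.1 hg hW hne)
    refine ⟨_, mem_image_of_mem _ hV, ?_⟩
    calc smallImage f (g ⁻¹' V)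
        ⊆ smallImage f (g ⁻¹' smallImage g (f ⁻¹' W)) :=
          smallImage_mono f (preimage_mono hVW)
      _ ⊆ smallImage f (f ⁻¹' W) := smallImage_mono f (preimage_smallImage_subset g _)
      _ ⊆ W := hf.2.2.1.smallImage_preimage_subset W

theorem HasFNS.image_smallImage_preimage (hg : Continuous g) (hg' : Surjective g)
    (hf : IsIrreducibleMap f) {BX : Set (Set X)} (hopen : ∀ V ∈ BX, IsOpen V)
    (hB : HasFNS BX) : HasFNS ((fun V => smallImage f (g ⁻¹' V)) '' BX) :=
  hB.image (fun _ _ h => smallImage_mono f (preimage_mono h))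
    (fun _ _ h => hf.2.2.1.disjoint_smallImage (h.preimage g))
    (fun _ h₁ _ h₂ => disjoint_of_disjoint_smallImage_preimage hg hg' hf
      (hopen _ h₁) (hopen _ h₂))

end Coabsolute

/-- If `g : Z → X` and `f : Z → Y` are irreducible maps and `X` has the π-FNS
property, then so does `Y`; moreover the family `{f^#(g⁻¹(V)) : V ∈ B_X}` is a
π-base of `Y` with the FNS property whenever `B_X` is a π-base of `X` with the
FNS property. -/
theorem piFNS_of_coabsolute {Z X Y : Type*} [TopologicalSpace Z]
    [TopologicalSpace X] [TopologicalSpace Y]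
    (g : Z → X) (f : Z → Y) (hg : IsIrreducibleMap g)
    (hf : IsIrreducibleMap f) :
    (HasPiFNS X → HasPiFNS Y) ∧
    ∀ BX : Set (Set X), IsPiBase BX → HasFNS BX →
      IsPiBase ((fun V => smallImage f (g ⁻¹' V)) '' BX) ∧
      HasFNS ((fun V => smallImage f (g ⁻¹' V)) '' BX) := by
  have transfer : ∀ BX : Set (Set X), IsPiBase BX → HasFNS BX →
      IsPiBase ((fun V => smallImage f (g ⁻¹' V)) '' BX) ∧
      HasFNS ((fun V => smallImage f (g ⁻¹' V)) '' BX) := fun BX hB hFNS =>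
    ⟨hB.image_smallImage_preimage hg hf,
      hFNS.image_smallImage_preimage hg.1 hg.2.2.1 hf fun V hV => (hB.1 V hV).1⟩
  exact ⟨fun ⟨BX, hB, hFNS⟩ => ⟨_, transfer BX hB hFNS⟩, transfer⟩
end
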